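/- Let X be a real vector space with dim X = n ≥ 2 and R : X* → End(X) a linear map with tr R(λ) = 0 for all λ ∈ X*. Let f₁,…,fₙ be a basis of X* and set V_{ij} = V^R_{f_i,f_j}. Then: (1) for every p ∈ X, T^R_p = {V^R_{λ,μ}(p) : λ, μ ∈ X*} = span{V_{ij}(p) : 1 ≤ i < j ≤ n}; and (2) R is uniquely determined by the collection {V_{ij}}_{1 ≤ i < j ≤ n}, i.e. if R' : X* → End(X) is another linear map with trace-free values and V^{R'}_{f_i,f_j} = V^R_{f_i,f_j} for all 1 ≤ i < j ≤ n, then R' = R; in particular, if V_{ij} = 0 for all 1 ≤ i < j ≤ n, then R = 0. -/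

import Mathlib

/-- For a linear map `R : X* → End(X)` and `λ, μ ∈ X*`, the quadratic vector field
`V^R_{λ,μ}(x) = μ(x) • R_λ(x) - λ(x) • R_μ(x)`. -/
def VR {X : Type*} [AddCommGroup X] [Module ℝ X]
    (R : Module.Dual ℝ X →ₗ[ℝ] (X →ₗ[ℝ] X))
    (lam mu : Module.Dual ℝ X) (x : X) : X :=
  mu x • R lam x - lam x • R mu x

/-- For a linear map `R : X* → End(X)` and `p ∈ X`, the set
`T^R_p = {R_λ(p) : λ ∈ X*, λ(p) = 0}`. -/
def TR {X : Type*} [AddCommGroup X] [Module ℝ X]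
    (R : Module.Dual ℝ X →ₗ[ℝ] (X →ₗ[ℝ] X)) (p : X) : Set X :=
  {y | ∃ lam : Module.Dual ℝ X, lam p = 0 ∧ R lam p = y}

/-!
Both parts rest on the fact that `V^R_{λ,μ}(p)` is alternating and bilinear in `(λ, μ)`, so
its values on the pairs `f_i, f_j` with `i < j` span everything it takes.

(1) `V^R_{λ,μ}(p) = R_ν(p)` for `ν = μ(p) λ - λ(p) μ`, which vanishes at `p`; conversely,
if `λ(p) = 0` and `μ(p) = 1`, then `R_λ(p) = V^R_{λ,μ}(p)`. Thus `T^R_p` is the set of values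
of `V^R_{·,·}(p)`; being the image of a subspace of `X*`, it is its own span.

(2) By linearity in `R`, it suffices to show that a trace-free `S` with all `V^S_{λ,μ} = 0`
vanishes. Testing against `μ` with `μ(x) = 1` gives `S_λ(x) = 0` whenever `λ(x) = 0`, so
`S_λ = λ ⊗ S_λ(a)` once `λ(a) = 1`, and trace-freeness gives `λ(S_λ(a)) = 0`. Replacing `λ`
by any `λ + ν` with `ν(a) = 0` changes neither `S_λ(a)` nor the value at `a`, hence
`ν(S_λ(a)) = 0` as well, so `S_λ(a) = 0`.
-/

open Module LinearMap Submodule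

theorem LinearMap.IsAlt.span_basis_lt {K M N ι : Type*} [CommRing K] [AddCommGroup M]
    [Module K M] [AddCommGroup N] [Module K N] [LinearOrder ι]
    {B : M →ₗ[K] M →ₗ[K] N} (hB : B.IsAlt) (b : Basis ι K M) :
    span K {y | ∃ i j, i < j ∧ B (b i) (b j) = y} = span K {y | ∃ x z, B x z = y} := by
  refine le_antisymm (span_mono ?_) (span_le.2 ?_)
  · rintro _ ⟨i, j, -, rfl⟩
    exact ⟨_, _, rfl⟩
  rintro _ ⟨x, z, rfl⟩
  have hmem : B x z ∈ map₂ B (span K (Set.range b)) (span K (Set.range b)) := by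
    rw [b.span_eq]
    exact apply_mem_map₂ B trivial trivial
  rw [map₂_span_span] at hmem
  refine span_le.2 ?_ hmem
  rintro _ ⟨_, ⟨i, rfl⟩, _, ⟨j, rfl⟩, rfl⟩
  dsimp only
  rcases lt_trichotomy i j with hij | rfl | hji
  · exact subset_span ⟨i, j, hij, rfl⟩
  · rw [hB.self_eq_zero]
    exact zero_mem _
  · rw [← hB.neg]
    exact neg_mem (subset_span ⟨j, i, hji, rfl⟩)

section

variable {X : Type*} [AddCommGroup X] [Module ℝ X]

def VRₗ (R : Dual ℝ X →ₗ[ℝ] (X →ₗ[ℝ] X)) (x : X) : Dual ℝ X →ₗ[ℝ] Dual ℝ X →ₗ[ℝ] X :=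
  LinearMap.mk₂ ℝ (fun lam mu => VR R lam mu x)
    (fun _ _ _ => by simp only [VR, map_add, LinearMap.add_apply, smul_add, add_smul]; abel)
    (fun _ _ _ => by
      simp only [VR, map_smul, LinearMap.smul_apply, smul_eq_mul, smul_sub, smul_smul, mul_comm])
    (fun _ _ _ => by simp only [VR, map_add, LinearMap.add_apply, smul_add, add_smul]; abel)
    (fun _ _ _ => by
      simp only [VR, map_smul, LinearMap.smul_apply, smul_eq_mul, smul_sub, smul_smul, mul_comm])

theorem isAlt_VRₗ (R : Dual ℝ X →ₗ[ℝ] (X →ₗ[ℝ] X)) (x : X) : (VRₗ R x).IsAlt :=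
  fun _ => sub_self _

theorem span_VR_basis_lt {ι : Type*} [LinearOrder ι] (R : Dual ℝ X →ₗ[ℝ] (X →ₗ[ℝ] X))
    (f : Basis ι ℝ (Dual ℝ X)) (x : X) :
    span ℝ {y | ∃ i j, i < j ∧ VR R (f i) (f j) x = y} =
      span ℝ {y | ∃ lam mu, VR R lam mu x = y} :=
  (isAlt_VRₗ R x).span_basis_lt f

theorem VR_sub (R' R : Dual ℝ X →ₗ[ℝ] (X →ₗ[ℝ] X)) (lam mu : Dual ℝ X) (x : X) :
    VR (R' - R) lam mu x = VR R' lam mu x - VR R lam mu x := by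
  simp only [VR, LinearMap.sub_apply, smul_sub]
  abel

section TR

variable (R : Dual ℝ X →ₗ[ℝ] (X →ₗ[ℝ] X)) (p : X)

theorem TR_eq_map : TR R p = ↑((ker (Dual.eval ℝ X p)).map (applyₗ p ∘ₗ R)) := by
  ext y
  simp [TR]

theorem TR_eq_setOf_VR : TR R p = {y | ∃ lam mu, VR R lam mu p = y} := by
  ext y
  constructor
  · rintro ⟨lam, hlam, rfl⟩
    rcases eq_or_ne p 0 with rfl | hp
    · exact ⟨lam, lam, by simp [VR]⟩
    obtain ⟨mu, hmu⟩ := Projective.exists_dual_eq_one ℝ hp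
    exact ⟨lam, mu, by simp [VR, hmu, hlam]⟩
  · rintro ⟨lam, mu, rfl⟩
    exact ⟨mu p • lam - lam p • mu, by simp [mul_comm], by simp [VR]⟩

theorem TR_eq_span_VR_basis {ι : Type*} [LinearOrder ι] (f : Basis ι ℝ (Dual ℝ X)) :
    TR R p = ↑(span ℝ {y | ∃ i j, i < j ∧ VR R (f i) (f j) p = y}) := by
  rw [span_VR_basis_lt, ← TR_eq_setOf_VR, TR_eq_map, span_eq]

end TR

section Flat

variable {S : Dual ℝ X →ₗ[ℝ] (X →ₗ[ℝ] X)}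

theorem forall_VR_eq_zero_of_basis {ι : Type*} [LinearOrder ι] (f : Basis ι ℝ (Dual ℝ X))
    (h : ∀ i j, i < j → ∀ x, VR S (f i) (f j) x = 0) (lam mu : Dual ℝ X) (x : X) :
    VR S lam mu x = 0 := by
  have hmem : VR S lam mu x ∈ span ℝ {y | ∃ lam mu, VR S lam mu x = y} :=
    subset_span ⟨lam, mu, rfl⟩
  rw [← span_VR_basis_lt S f] at hmem
  refine (mem_bot ℝ).1 (span_le.2 ?_ hmem)
  rintro _ ⟨i, j, hij, rfl⟩
  exact h i j hij x

variable (hS : ∀ lam mu x, VR S lam mu x = 0)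
include hS

theorem apply_eq_zero_of_forall_VR_eq_zero {lam : Dual ℝ X} {x : X} (hx : lam x = 0) :
    S lam x = 0 := by
  rcases eq_or_ne x 0 with rfl | hx0
  · exact map_zero _
  obtain ⟨mu, hmu⟩ := Projective.exists_dual_eq_one ℝ hx0
  simpa [VR, hmu, hx] using hS lam mu x

theorem eq_smulRight_of_forall_VR_eq_zero {lam : Dual ℝ X} {a : X} (ha : lam a = 1) :
    S lam = lam.smulRight (S lam a) := by
  ext y
  have h : S lam (y - lam y • a) = 0 := apply_eq_zero_of_forall_VR_eq_zero hS (by simp [ha])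
  simpa [sub_eq_zero] using h

theorem apply_eq_zero_of_apply_eq_one_of_forall_VR_eq_zero [FiniteDimensional ℝ X]
    (htr : ∀ lam, trace ℝ X (S lam) = 0) {lam : Dual ℝ X} {a : X} (ha : lam a = 1) :
    S lam a = 0 := by
  have trace_eq {l : Dual ℝ X} (hl : l a = 1) : l (S l a) = 0 := by
    rw [← trace_smulRight, ← eq_smulRight_of_forall_VR_eq_zero hS hl, htr]
  rw [← forall_dual_apply_eq_zero_iff ℝ]
  intro φ
  set ν := φ - φ a • lam
  have hν : ν a = 0 := by simp [ν, ha]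
  have hshift : S (lam + ν) a = S lam a := by
    rw [map_add, LinearMap.add_apply, apply_eq_zero_of_forall_VR_eq_zero hS hν, add_zero]
  have h := trace_eq (l := lam + ν) (by simp [ha, hν])
  rw [hshift, LinearMap.add_apply, trace_eq ha, zero_add] at h
  simpa [ν, trace_eq ha] using h

theorem eq_zero_of_forall_VR_eq_zero [FiniteDimensional ℝ X]
    (htr : ∀ lam, trace ℝ X (S lam) = 0) : S = 0 := by
  refine LinearMap.ext fun lam => LinearMap.ext fun y => ?_
  rcases eq_or_ne (lam y) 0 with hy | hy
  · exact apply_eq_zero_of_forall_VR_eq_zero hS hy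
  have ha : lam ((lam y)⁻¹ • y) = 1 := by simp [hy]
  calc S lam y = lam y • S lam ((lam y)⁻¹ • y) := by rw [map_smul, smul_inv_smul₀ hy]
    _ = 0 := by rw [apply_eq_zero_of_apply_eq_one_of_forall_VR_eq_zero hS htr ha, smul_zero]

end Flat

end

theorem VR_spans_TR_and_determines_R
    {X : Type*} [AddCommGroup X] [Module ℝ X] [FiniteDimensional ℝ X]
    (n : ℕ)
    (R : Module.Dual ℝ X →ₗ[ℝ] (X →ₗ[ℝ] X))
    (htr : ∀ lam : Module.Dual ℝ X, LinearMap.trace ℝ X (R lam) = 0)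
    (f : Module.Basis (Fin n) ℝ (Module.Dual ℝ X)) :
    (∀ p : X,
      TR R p = {y | ∃ lam mu : Module.Dual ℝ X, VR R lam mu p = y} ∧
      TR R p = ↑(Submodule.span ℝ
        {y | ∃ i j : Fin n, i < j ∧ VR R (f i) (f j) p = y})) ∧
    (∀ R' : Module.Dual ℝ X →ₗ[ℝ] (X →ₗ[ℝ] X),
      (∀ lam : Module.Dual ℝ X, LinearMap.trace ℝ X (R' lam) = 0) →
      (∀ i j : Fin n, i < j → ∀ x : X, VR R' (f i) (f j) x = VR R (f i) (f j) x) →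
      R' = R) ∧
    ((∀ i j : Fin n, i < j → ∀ x : X, VR R (f i) (f j) x = 0) → R = 0) := by
  refine ⟨fun p => ⟨TR_eq_setOf_VR R p, TR_eq_span_VR_basis R p f⟩, fun R' htr' hV => ?_,
    fun hV => eq_zero_of_forall_VR_eq_zero (forall_VR_eq_zero_of_basis f hV) htr⟩
  rw [← sub_eq_zero]
  refine eq_zero_of_forall_VR_eq_zero (forall_VR_eq_zero_of_basis f fun i j hij x => ?_)
    fun lam => by rw [LinearMap.sub_apply, map_sub, htr', htr, sub_zero]
  rw [VR_sub, hV i j hij x, sub_self]
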